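/- Let M > 0, Lambda < 0, and a, Q be real numbers with Lambda*a^2 > -3 and K := a^2 + (1 + Lambda*a^2/3)^2 * Q^2 > 0. Define Delta_r(r) := (r^2 + a^2)(1 - Lambda*r^2/3) - 2*M*r + (1 + Lambda*a^2/3)^2 * Q^2, and set A := a^2 - 3/Lambda, C := -(3/Lambda)*K (so A > 0 and C > 0), and X+ := (2/27) * ( -A^3 + 36*A*C + (A^2 + 12*C)^(3/2) ). Then the following are equivalent: (i) there exist real numbers 0 < r- < r+ such that Delta_r(r-) = Delta_r(r+) = 0, Delta_r'(r-) ≠ 0, Delta_r'(r+) ≠ 0, and Delta_r(r) < 0 for all r in the open interval (r-, r+); (ii) 36*M^2 > Lambda^2 * X+. -/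

import Mathlib

/-!
With `A = a² - 3/Λ`, `C = -(3/Λ) K` and `m = -3M/Λ` one has `Δ_r = (-Λ/3) q` for the depressed
quartic `q r = r⁴ + A r² - 2 m r + C`. Since `q` is strictly convex, `q 0 = C > 0` and `q → ∞`,
condition (i) holds iff `q` is negative somewhere on `(0, ∞)`: the two simple zeros are then the
ends of the interval where `q < 0`. Writing `C = 3u⁴ + A u²` with `u > 0`, i.e.
`u² = (√(A² + 12C) - A)/6`, gives
`q v = (v - u)² (v² + 2uv + 3u² + A) - 2 (m - (2u³ + A u)) v`,
so `q` is negative somewhere on `(0, ∞)` iff `m > 2u³ + A u`. Squaring, and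
`54 (2u³ + A u)² = -A³ + 36 A C + (A² + 12 C)^(3/2)`, this is `36 M² > Λ² X₊`.
-/

/-- The horizon function of the Kerr-Newman-(anti-)de Sitter metric. -/
noncomputable def DeltaR (M Λ a Q : ℝ) (r : ℝ) : ℝ :=
  (r ^ 2 + a ^ 2) * (1 - Λ * r ^ 2 / 3) - 2 * M * r + (1 + Λ * a ^ 2 / 3) ^ 2 * Q ^ 2

open Set Filter

section ConvexZeros

variable {f : ℝ → ℝ}

lemma ConvexOn.deriv_neg_of_zero_of_neg (hf : ConvexOn ℝ univ f) {x v : ℝ}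
    (hd : DifferentiableAt ℝ f x) (hxv : x < v) (hx : f x = 0) (hv : f v < 0) :
    deriv f x < 0 := by
  refine (hf.deriv_le_slope trivial trivial hxv hd).trans_lt ?_
  rw [slope_def_field, hx]
  exact div_neg_of_neg_of_pos (by linarith) (by linarith)

lemma ConvexOn.deriv_pos_of_neg_of_zero (hf : ConvexOn ℝ univ f) {v y : ℝ}
    (hd : DifferentiableAt ℝ f y) (hvy : v < y) (hv : f v < 0) (hy : f y = 0) :
    0 < deriv f y := by
  refine lt_of_lt_of_le ?_ (hf.slope_le_deriv trivial trivial hvy hd)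
  rw [slope_def_field, hy]
  exact div_pos (by linarith) (by linarith)

theorem StrictConvexOn.exists_simple_zeros_iff (hf : StrictConvexOn ℝ univ f)
    (hd : Differentiable ℝ f) (h0 : 0 < f 0) (htop : Tendsto f atTop atTop) :
    (∃ rm rp : ℝ, 0 < rm ∧ rm < rp ∧ f rm = 0 ∧ f rp = 0 ∧ deriv f rm ≠ 0 ∧ deriv f rp ≠ 0 ∧
        ∀ r ∈ Ioo rm rp, f r < 0) ↔
      ∃ v, 0 < v ∧ f v < 0 := by
  constructor
  · rintro ⟨rm, rp, hrm, hlt, -, -, -, -, hneg⟩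
    exact ⟨(rm + rp) / 2, by linarith, hneg _ ⟨by linarith, by linarith⟩⟩
  · rintro ⟨v, hv, hfv⟩
    obtain ⟨R, hR, hvR⟩ := ((htop.eventually_gt_atTop 0).and (eventually_gt_atTop v)).exists
    obtain ⟨rm, ⟨hrm, hrmv⟩, hfrm⟩ :=
      intermediate_value_Ioo' hv.le hd.continuous.continuousOn ⟨hfv, h0⟩
    obtain ⟨rp, ⟨hvrp, -⟩, hfrp⟩ :=
      intermediate_value_Ioo hvR.le hd.continuous.continuousOn ⟨hfv, hR⟩
    refine ⟨rm, rp, hrm, hrmv.trans hvrp, hfrm, hfrp,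
      (hf.convexOn.deriv_neg_of_zero_of_neg (hd rm) hrmv hfrm hfv).ne,
      (hf.convexOn.deriv_pos_of_neg_of_zero (hd rp) hvrp hfv hfrp).ne', fun r hr => ?_⟩
    have hseg : r ∈ openSegment ℝ rm rp := by rwa [openSegment_eq_Ioo (hrmv.trans hvrp)]
    simpa [hfrm, hfrp] using hf.lt_on_openSegment trivial trivial (hrmv.trans hvrp).ne hseg

end ConvexZeros

noncomputable def depressedQuartic (A C m r : ℝ) : ℝ := r ^ 4 + A * r ^ 2 - 2 * m * r + C

section DepressedQuartic

variable {A C m : ℝ}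

lemma hasDerivAt_depressedQuartic (A C m r : ℝ) :
    HasDerivAt (depressedQuartic A C m) (4 * r ^ 3 + 2 * A * r - 2 * m) r := by
  refine ((((hasDerivAt_pow 4 r).add ((hasDerivAt_pow 2 r).const_mul A)).sub
    ((hasDerivAt_id r).const_mul (2 * m))).add_const C).congr_deriv ?_
  norm_num
  ring

lemma strictMono_deriv_depressedQuartic (hA : 0 ≤ A) (m : ℝ) :
    StrictMono fun r : ℝ => 4 * r ^ 3 + 2 * A * r - 2 * m := by
  intro x y hxy
  have hyx := sub_pos.2 hxy
  nlinarith [mul_nonneg hyx.le (sq_nonneg (x + y)), mul_nonneg hyx.le hA, pow_pos hyx 3]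

lemma tendsto_depressedQuartic_atTop (hA : 0 ≤ A) (C m : ℝ) :
    Tendsto (depressedQuartic A C m) atTop atTop := by
  refine tendsto_atTop_mono' _ ?_ (tendsto_atTop_add_const_right _ C tendsto_id)
  filter_upwards [eventually_ge_atTop 1, eventually_ge_atTop (2 * m + 1)] with r h1 hm
  have hr : 0 ≤ r := zero_le_one.trans h1
  have hcube : r ≤ r ^ 3 - 2 * m := by nlinarith [mul_le_mul_of_nonneg_left h1 hr]
  unfold depressedQuartic id
  nlinarith [mul_nonneg hA (sq_nonneg r), mul_le_mul_of_nonneg_left hcube hr]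

lemma depressedQuartic_eq_of_double_root {u : ℝ} (hC : C = 3 * u ^ 4 + A * u ^ 2) (v : ℝ) :
    depressedQuartic A C m v =
      (v - u) ^ 2 * (v ^ 2 + 2 * u * v + 3 * u ^ 2 + A) - 2 * (m - (2 * u ^ 3 + A * u)) * v := by
  subst hC
  unfold depressedQuartic
  ring

lemma exists_pos_depressedQuartic_neg_iff {u : ℝ} (hA : 0 ≤ A) (hu : 0 < u)
    (hC : C = 3 * u ^ 4 + A * u ^ 2) :
    (∃ v, 0 < v ∧ depressedQuartic A C m v < 0) ↔ 2 * u ^ 3 + A * u < m := by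
  simp_rw [depressedQuartic_eq_of_double_root hC]
  constructor
  · rintro ⟨v, hv, hneg⟩
    by_contra! hm
    have : 0 ≤ (v - u) ^ 2 * (v ^ 2 + 2 * u * v + 3 * u ^ 2 + A) := by positivity
    nlinarith [mul_nonneg (sub_nonneg.2 hm) hv.le]
  · intro hm
    refine ⟨u, hu, ?_⟩
    nlinarith [mul_pos (sub_pos.2 hm) hu]

lemma exists_double_root (hA : 0 ≤ A) (hC : 0 < C) :
    ∃ u, 0 < u ∧ C = 3 * u ^ 4 + A * u ^ 2 ∧
      54 * (2 * u ^ 3 + A * u) ^ 2 = -A ^ 3 + 36 * A * C + √(A ^ 2 + 12 * C) ^ 3 := by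
  set S := √(A ^ 2 + 12 * C)
  have hS : S ^ 2 = A ^ 2 + 12 * C := Real.sq_sqrt (by positivity)
  have hAS : A < S := by nlinarith [Real.sqrt_nonneg (A ^ 2 + 12 * C)]
  set u := √((S - A) / 6)
  have hu : u ^ 2 = (S - A) / 6 := Real.sq_sqrt (by linarith)
  refine ⟨u, Real.sqrt_pos.2 (by linarith), ?_, ?_⟩
  · rw [show u ^ 4 = (u ^ 2) ^ 2 by ring, hu]
    linear_combination (-1 / 12) * hS
  · rw [show (2 * u ^ 3 + A * u) ^ 2 = u ^ 2 * (2 * u ^ 2 + A) ^ 2 by ring, hu]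
    linear_combination (3 * A) * hS

lemma exists_pos_depressedQuartic_neg_iff_lt (hA : 0 ≤ A) (hC : 0 < C) (hm : 0 < m) :
    (∃ v, 0 < v ∧ depressedQuartic A C m v < 0) ↔
      -A ^ 3 + 36 * A * C + √(A ^ 2 + 12 * C) ^ 3 < 54 * m ^ 2 := by
  obtain ⟨u, hu, hCu, hcrit⟩ := exists_double_root hA hC
  rw [exists_pos_depressedQuartic_neg_iff hA hu hCu, ← hcrit,
    ← pow_lt_pow_iff_left₀ (by positivity) hm.le two_ne_zero]
  constructor <;> intro h <;> linarith

end DepressedQuartic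

section DeltaR

variable {M Λ a Q : ℝ}

lemma sq_sub_three_div_pos (hΛ : Λ < 0) (a : ℝ) : 0 < a ^ 2 - 3 / Λ := by
  have := div_neg_of_pos_of_neg three_pos hΛ
  nlinarith [sq_nonneg a]

lemma DeltaR_eq_mul_depressedQuartic (hΛ : Λ ≠ 0) :
    DeltaR M Λ a Q = fun r => -Λ / 3 * depressedQuartic (a ^ 2 - 3 / Λ)
      (-(3 / Λ) * (a ^ 2 + (1 + Λ * a ^ 2 / 3) ^ 2 * Q ^ 2)) (-3 * M / Λ) r := by
  funext r
  unfold DeltaR depressedQuartic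
  field_simp
  ring

lemma differentiable_DeltaR : Differentiable ℝ (DeltaR M Λ a Q) := by
  unfold DeltaR
  fun_prop

lemma strictConvexOn_DeltaR (hΛ : Λ < 0) : StrictConvexOn ℝ univ (DeltaR M Λ a Q) := by
  refine StrictMono.strictConvexOn_univ_of_deriv differentiable_DeltaR.continuous ?_
  have hderiv : deriv (DeltaR M Λ a Q) = fun r => -Λ / 3 *
      (4 * r ^ 3 + 2 * (a ^ 2 - 3 / Λ) * r - 2 * (-3 * M / Λ)) := by
    funext r
    rw [DeltaR_eq_mul_depressedQuartic hΛ.ne]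
    exact ((hasDerivAt_depressedQuartic _ _ _ r).const_mul _).deriv
  rw [hderiv]
  exact (strictMono_deriv_depressedQuartic (sq_sub_three_div_pos hΛ a).le _).const_mul
    (by linarith)

lemma tendsto_DeltaR_atTop (hΛ : Λ < 0) : Tendsto (DeltaR M Λ a Q) atTop atTop := by
  rw [DeltaR_eq_mul_depressedQuartic hΛ.ne]
  exact (tendsto_depressedQuartic_atTop (sq_sub_three_div_pos hΛ a).le _ _).const_mul_atTop
    (by linarith)

lemma exists_pos_DeltaR_neg_iff (hΛ : Λ < 0) :
    (∃ v, 0 < v ∧ DeltaR M Λ a Q v < 0) ↔ ∃ v, 0 < v ∧ depressedQuartic (a ^ 2 - 3 / Λ)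
      (-(3 / Λ) * (a ^ 2 + (1 + Λ * a ^ 2 / 3) ^ 2 * Q ^ 2)) (-3 * M / Λ) v < 0 := by
  simp_rw [DeltaR_eq_mul_depressedQuartic hΛ.ne, ← smul_eq_mul,
    smul_neg_iff_of_pos_left (by linarith : 0 < -Λ / 3)]

end DeltaR

theorem stmt3 (M Λ a Q : ℝ) (hM : 0 < M) (hΛ : Λ < 0)
    (hK : 0 < a ^ 2 + (1 + Λ * a ^ 2 / 3) ^ 2 * Q ^ 2) :
    (∃ rm rp : ℝ, 0 < rm ∧ rm < rp ∧
        DeltaR M Λ a Q rm = 0 ∧ DeltaR M Λ a Q rp = 0 ∧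
        deriv (DeltaR M Λ a Q) rm ≠ 0 ∧ deriv (DeltaR M Λ a Q) rp ≠ 0 ∧
        ∀ r ∈ Set.Ioo rm rp, DeltaR M Λ a Q r < 0) ↔
      36 * M ^ 2 >
        Λ ^ 2 * (2 / 27 *
          (-(a ^ 2 - 3 / Λ) ^ 3 +
            36 * (a ^ 2 - 3 / Λ) *
              (-(3 / Λ) * (a ^ 2 + (1 + Λ * a ^ 2 / 3) ^ 2 * Q ^ 2)) +
            Real.rpow
              ((a ^ 2 - 3 / Λ) ^ 2 +
                12 * (-(3 / Λ) * (a ^ 2 + (1 + Λ * a ^ 2 / 3) ^ 2 * Q ^ 2)))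
              (3 / 2))) := by
  have hA := sq_sub_three_div_pos hΛ a
  have hC := mul_pos (neg_pos.2 (div_neg_of_pos_of_neg three_pos hΛ)) hK
  have hm : 0 < -3 * M / Λ := div_pos_of_neg_of_neg (by linarith) hΛ
  rw [(strictConvexOn_DeltaR hΛ).exists_simple_zeros_iff differentiable_DeltaR
      (by simpa [DeltaR] using hK) (tendsto_DeltaR_atTop hΛ),
    exists_pos_DeltaR_neg_iff hΛ, exists_pos_depressedQuartic_neg_iff_lt hA.le hC hm,
    Real.rpow_eq_pow, Real.rpow_div_two_eq_sqrt _ (by positivity), Real.rpow_ofNat]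
  have h36 : 36 * M ^ 2 = Λ ^ 2 * (2 / 27 * (54 * (-3 * M / Λ) ^ 2)) := by
    field_simp [hΛ.ne]
    ring
  rw [gt_iff_lt, h36, mul_lt_mul_iff_right₀ (sq_pos_of_neg hΛ),
    mul_lt_mul_iff_right₀ (by norm_num)]
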